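/- For every integer n ≥ 2, if X ∈ so(2n, ℂ) commutes with the block matrix fromBlocks Y 0 0 0 (the 2n×2n matrix with upper-left (2n−1)×(2n−1) block Y and zeros elsewhere) for every Y ∈ so(2n−1, ℂ), then X = 0. In other words, the centralizer of the standardly embedded so(2n−1, ℂ) in so(2n, ℂ) is trivial. -/

import Mathlib

attribute [local instance 100] LieRing.ofAssociativeRing

/-- The orthogonal Lie algebra `so(ℂ)` over an arbitrary finite index type:
skew-symmetric complex matrices (`Xᵀ = -X`). -/
def so' (ι : Type) [Fintype ι] [DecidableEq ι] : LieSubalgebra ℂ (Matrix ι ι ℂ) :=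
  skewAdjointMatricesLieSubalgebra (1 : Matrix ι ι ℂ)

/-- The orthogonal Lie algebra `so(m, ℂ)` of skew-symmetric `m × m` complex matrices
(`Xᵀ = -X`), a Lie subalgebra of `gl(m, ℂ)`. -/
def so (m : ℕ) : LieSubalgebra ℂ (Matrix (Fin m) (Fin m) ℂ) :=
  skewAdjointMatricesLieSubalgebra (1 : Matrix (Fin m) (Fin m) ℂ)

/-!
Write `X = fromBlocks A B C D` with `A` of size `m = 2n - 1`. Commuting with `fromBlocks Y 0 0 0`
means that `A` commutes with every `Y ∈ so(m)` and that `Y B = 0`. Testing against the elementary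
skew matrices `E_ij - E_ji` kills `B` and, once `m ≥ 3` leaves room for a third index, every
off-diagonal entry of `A`; skewness then kills the diagonal of `A`, the block `C = -Bᵀ`, and the
`1 × 1` block `D`.
-/

open Matrix

section Elementary

variable {ι κ R : Type*} [DecidableEq ι] [Ring R]

theorem single_sub_single_mul_apply_of_ne {B : Matrix ι κ R} [Fintype ι] {i j : ι} (hij : i ≠ j)
    (c : κ) : ((single i j (1 : R) - single j i 1) * B : Matrix ι κ R) i c = B j c := by
  simp [mul_apply, single_apply, hij.symm]

theorem eq_zero_of_forall_single_sub_single_mul_eq_zero [Fintype ι] [Nontrivial ι]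
    {B : Matrix ι κ R} (h : ∀ i j : ι, (single i j (1 : R) - single j i 1) * B = 0) : B = 0 := by
  ext j c
  obtain ⟨i, hij⟩ := exists_ne j
  simpa [single_sub_single_mul_apply_of_ne hij] using congrFun₂ (h i j) i c

theorem apply_eq_zero_of_forall_commute_single_sub_single [Fintype ι] {A : Matrix ι ι R}
    (h : ∀ i j : ι, Commute A (single i j (1 : R) - single j i 1)) {k i j : ι}
    (hki : k ≠ i) (hji : j ≠ i) (hjk : j ≠ k) : A k i = 0 := by
  simpa [mul_sub, sub_mul, hki, hji, hjk.symm] using congrFun₂ (h i j).eq k j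

end Elementary

section SkewSymmetric

variable {ι κ : Type} [Fintype ι] [DecidableEq ι] [Fintype κ] [DecidableEq κ]

theorem mem_so'_iff_transpose_eq_neg {X : Matrix ι ι ℂ} : X ∈ so' ι ↔ Xᵀ = -X := by
  rw [so', mem_skewAdjointMatricesLieSubalgebra, mem_skewAdjointMatricesSubmodule,
    Matrix.IsSkewAdjoint, Matrix.IsAdjointPair, mul_one, one_mul]

theorem apply_neg_of_mem_so' {X : Matrix ι ι ℂ} (hX : X ∈ so' ι) (i j : ι) :
    X j i = -X i j :=
  congrFun₂ (mem_so'_iff_transpose_eq_neg.mp hX) i j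

theorem apply_self_eq_zero_of_mem_so' {X : Matrix ι ι ℂ} (hX : X ∈ so' ι) (i : ι) :
    X i i = 0 :=
  self_eq_neg.mp (apply_neg_of_mem_so' hX i i)

theorem eq_zero_of_mem_so'_of_subsingleton [Subsingleton ι] {X : Matrix ι ι ℂ}
    (hX : X ∈ so' ι) : X = 0 := by
  ext i j
  rw [Subsingleton.elim i j]
  exact apply_self_eq_zero_of_mem_so' hX j

theorem single_sub_single_mem_so' (i j : ι) : single i j (1 : ℂ) - single j i 1 ∈ so' ι := by
  rw [mem_so'_iff_transpose_eq_neg, transpose_sub, transpose_single, transpose_single, neg_sub]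

theorem eq_zero_of_mem_so'_of_forall_commute (hι : 3 ≤ Fintype.card ι) {A : Matrix ι ι ℂ}
    (hA : A ∈ so' ι) (hcomm : ∀ Y ∈ so' ι, Commute A Y) : A = 0 := by
  ext k i
  by_cases hki : k = i
  · rw [hki]
    exact apply_self_eq_zero_of_mem_so' hA i
  · obtain ⟨j, hji, hjk⟩ :=
      ENat.exists_ne_ne_of_three_le (by simpa [ENat.card_eq_coe_fintype_card] using hι) i k
    exact apply_eq_zero_of_forall_commute_single_sub_single
      (fun i j => hcomm _ (single_sub_single_mem_so' i j)) hki hji hjk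

theorem toBlocks₁₁_mem_so' {X : Matrix (ι ⊕ κ) (ι ⊕ κ) ℂ} (hX : X ∈ so' (ι ⊕ κ)) :
    X.toBlocks₁₁ ∈ so' ι :=
  mem_so'_iff_transpose_eq_neg.mpr <| funext₂ fun i j =>
    apply_neg_of_mem_so' hX (.inl i) (.inl j)

theorem toBlocks₂₂_mem_so' {X : Matrix (ι ⊕ κ) (ι ⊕ κ) ℂ} (hX : X ∈ so' (ι ⊕ κ)) :
    X.toBlocks₂₂ ∈ so' κ :=
  mem_so'_iff_transpose_eq_neg.mpr <| funext₂ fun i j =>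
    apply_neg_of_mem_so' hX (.inr i) (.inr j)

theorem toBlocks₂₁_eq_neg_transpose_toBlocks₁₂ {X : Matrix (ι ⊕ κ) (ι ⊕ κ) ℂ}
    (hX : X ∈ so' (ι ⊕ κ)) : X.toBlocks₂₁ = -X.toBlocks₁₂ᵀ :=
  funext₂ fun q a => apply_neg_of_mem_so' hX (.inl a) (.inr q)

end SkewSymmetric

theorem commute_toBlocks₁₁_and_mul_toBlocks₁₂_eq_zero {ι κ R : Type*} [Fintype ι] [Fintype κ]
    [Ring R] {X : Matrix (ι ⊕ κ) (ι ⊕ κ) R} {Y : Matrix ι ι R}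
    (h : X * fromBlocks Y 0 0 0 = fromBlocks Y 0 0 0 * X) :
    Commute X.toBlocks₁₁ Y ∧ Y * X.toBlocks₁₂ = 0 := by
  rw [← fromBlocks_toBlocks X, fromBlocks_multiply, fromBlocks_multiply] at h
  exact ⟨(by simpa using congrArg toBlocks₁₁ h : X.toBlocks₁₁ * Y = Y * X.toBlocks₁₁),
    by simpa using (congrArg toBlocks₁₂ h).symm⟩

theorem eq_fromBlocks_zero_zero_zero_toBlocks₂₂ {ι κ : Type} [Fintype ι] [DecidableEq ι]
    [Fintype κ] [DecidableEq κ] (hι : 3 ≤ Fintype.card ι) {X : Matrix (ι ⊕ κ) (ι ⊕ κ) ℂ}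
    (hX : X ∈ so' (ι ⊕ κ))
    (hcomm : ∀ Y ∈ so' ι, X * fromBlocks Y 0 0 0 = fromBlocks Y 0 0 0 * X) :
    X = fromBlocks 0 0 0 X.toBlocks₂₂ := by
  have : Nontrivial ι := Fintype.one_lt_card_iff_nontrivial.mp (by omega)
  have hblocks Y hY := commute_toBlocks₁₁_and_mul_toBlocks₁₂_eq_zero (hcomm Y hY)
  have hA : X.toBlocks₁₁ = 0 :=
    eq_zero_of_mem_so'_of_forall_commute hι (toBlocks₁₁_mem_so' hX) fun Y hY => (hblocks Y hY).1
  have hB : X.toBlocks₁₂ = 0 := eq_zero_of_forall_single_sub_single_mul_eq_zero fun i j =>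
    (hblocks _ (single_sub_single_mem_so' i j)).2
  have hC : X.toBlocks₂₁ = 0 := by
    rw [toBlocks₂₁_eq_neg_transpose_toBlocks₁₂ hX, hB, transpose_zero, neg_zero]
  conv_lhs => rw [← fromBlocks_toBlocks X, hA, hB, hC]

/-- For every `n ≥ 2`, if `X ∈ so(2n, ℂ)` commutes with `fromBlocks Y 0 0 0` for every
`Y ∈ so(2n - 1, ℂ)`, then `X = 0`: the centralizer of the standardly embedded
`so(2n - 1, ℂ)` in `so(2n, ℂ)` is trivial. -/
theorem centralizer_so_in_so_trivial (n : ℕ) (hn : 2 ≤ n)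
    (X : Matrix (Fin (2 * n - 1) ⊕ Fin 1) (Fin (2 * n - 1) ⊕ Fin 1) ℂ)
    (hX : X ∈ so' (Fin (2 * n - 1) ⊕ Fin 1))
    (hcomm : ∀ Y ∈ so (2 * n - 1),
      X * Matrix.fromBlocks Y 0 0 0 = Matrix.fromBlocks Y 0 0 0 * X) : X = 0 := by
  have hcard : 3 ≤ Fintype.card (Fin (2 * n - 1)) := by
    rw [Fintype.card_fin]
    omega
  rw [eq_fromBlocks_zero_zero_zero_toBlocks₂₂ hcard hX hcomm,
    eq_zero_of_mem_so'_of_subsingleton (toBlocks₂₂_mem_so' hX), fromBlocks_zero]
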